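/- Let D and E be coalgebras in a cocomplete coabelian monoidal category M satisfying AB5 (filtered colimits are exact), let δ : D → E be a monomorphism which is a morphism of coalgebras, let D̃_E := colim_{i∈ℕ} D^{∧_E^i} with structural morphisms ξ_i : D^{∧_E^i} → D̃_E, and let δ̃ : D̃_E → E be the unique coalgebra homomorphism with δ̃ ∘ ξ_i = δ_i for all i. If f : E → C is a coalgebra homomorphism such that f ∘ δ_2 : D ∧_E D → C is a monomorphism, then the coalgebra homomorphism f ∘ δ̃ : D̃_E → C is a monomorphism. -/

import Mathlib

open CategoryTheory CategoryTheory.Limits MonoidalCategory ZeroObject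

universe v u

variable {M : Type u} [Category.{v} M] [MonoidalCategory M] [Abelian M]

/-- The `n`-th tensor power `X^{⊗n}` of an object, with `X^{⊗0} = 𝟙`, `X^{⊗1} = X` and
`X^{⊗(n+1)} = X^{⊗n} ⊗ X` for `n ≥ 1`. -/
def tpow (X : M) : ℕ → M
  | 0 => 𝟙_ M
  | 1 => X
  | (n + 2) => tpow X (n + 1) ⊗ X

/-- The `n`-th tensor power `f^{⊗n}` of a morphism. -/
def tpowHom {X Y : M} (f : X ⟶ Y) : (n : ℕ) → (tpow X n ⟶ tpow Y n)
  | 0 => 𝟙 (𝟙_ M)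
  | 1 => f
  | (n + 2) => tpowHom f (n + 1) ⊗ₘ f

/-- The `n`-th iterated comultiplication `Δ_E^n : E ⟶ E^{⊗(n+1)}` of a coalgebra `E`,
with `Δ_E^0 = 𝟙 E`, `Δ_E^1 = Δ_E` and `Δ_E^n = (Δ_E^{n-1} ⊗ E) ∘ Δ_E` for `n > 1`. -/
noncomputable def iterComul (E : Comon M) : (n : ℕ) → (E.X ⟶ tpow E.X (n + 1))
  | 0 => 𝟙 E.X
  | (n + 1) => ComonObj.comul (X := E.X) ≫ (iterComul E n ⊗ₘ 𝟙 E.X)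

variable {D E : Comon M} (δ : D ⟶ E)

/-- The `n`-th iterated wedge power `D^{∧_E^n} := ker (p^{⊗n} ∘ Δ_E^{n-1})` of a subcoalgebra
`δ : D ↪ E`, where `p : E ⟶ E/D` is the cokernel of `δ`; by convention `D^{∧_E^0} = 0`. -/
noncomputable def wedgePow : ℕ → M
  | 0 => 0
  | (n + 1) => kernel (iterComul E n ≫ tpowHom (cokernel.π δ.hom) (n + 1))

/-- The canonical monomorphism `δ_n : D^{∧_E^n} ⟶ E`; by convention `δ_0 = 0`. -/
noncomputable def wedgePowι : (n : ℕ) → (wedgePow δ n ⟶ E.X)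
  | 0 => 0
  | (n + 1) => kernel.ι (iterComul E n ≫ tpowHom (cokernel.π δ.hom) (n + 1))


instance wedgePowι_mono (n : ℕ) : Mono (wedgePowι δ (n + 1)) := by
  dsimp only [wedgePowι]; exact equalizer.ι_mono
lemma tensorLeft_map (W : M) {A B : M} (q : A ⟶ B) : (tensorLeft W).map q = W ◁ q := rfl

lemma tensorRight_map (W : M) {A B : M} (q : A ⟶ B) : (tensorRight W).map q = q ▷ W := rfl

section Aux

variable [∀ X : M, (tensorLeft X).Additive] [∀ X : M, (tensorRight X).Additive]
  [∀ X : M, PreservesFiniteLimits (tensorLeft X)]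
  [∀ X : M, PreservesFiniteLimits (tensorRight X)]

lemma whiskerLeft_zero' (W : M) {A B : M} :
    W ◁ (0 : A ⟶ B) = (0 : W ⊗ A ⟶ W ⊗ B) := by
  rw [← tensorLeft_map]; exact (tensorLeft W).map_zero _ _

lemma whiskerRight_zero' (W : M) {A B : M} :
    (0 : A ⟶ B) ▷ W = (0 : A ⊗ W ⟶ B ⊗ W) := by
  rw [← tensorRight_map]; exact (tensorRight W).map_zero _ _

lemma factorThruKernelLeft (W : M) {A B K T : M} (q : A ⟶ B) (k : K ⟶ A) (hk0 : k ≫ q = 0)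
    (hk : IsLimit (KernelFork.ofι k hk0)) (h : T ⟶ W ⊗ A) (hz : h ≫ (W ◁ q) = 0) :
    ∃ u : T ⟶ W ⊗ K, u ≫ (W ◁ k) = h := by
  have hl := isLimitForkMapOfIsLimit' (tensorLeft W) hk0 hk
  have hz' : h ≫ (tensorLeft W).map q = 0 := by simpa using hz
  obtain ⟨u, hu⟩ := KernelFork.IsLimit.lift' hl h hz'
  exact ⟨u, by simpa using hu⟩

lemma factorThruKernelRight (W : M) {A B K T : M} (q : A ⟶ B) (k : K ⟶ A) (hk0 : k ≫ q = 0)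
    (hk : IsLimit (KernelFork.ofι k hk0)) (h : T ⟶ A ⊗ W) (hz : h ≫ (q ▷ W) = 0) :
    ∃ u : T ⟶ K ⊗ W, u ≫ (k ▷ W) = h := by
  have hl := isLimitForkMapOfIsLimit' (tensorRight W) hk0 hk
  have hz' : h ≫ (tensorRight W).map q = 0 := by simpa using hz
  obtain ⟨u, hu⟩ := KernelFork.IsLimit.lift' hl h hz'
  exact ⟨u, by simpa using hu⟩

end Aux
set_option linter.unusedSectionVars false
set_option maxHeartbeats 800000

section Aux2

variable [∀ X : M, (tensorLeft X).Additive] [∀ X : M, (tensorRight X).Additive]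
  [∀ X : M, PreservesFiniteLimits (tensorLeft X)]
  [∀ X : M, PreservesFiniteLimits (tensorRight X)]

lemma tensor_split_left {A B C' X Y : M} (u : A ⟶ B) (v : B ⟶ C') (w : X ⟶ Y) :
    (u ≫ v) ⊗ₘ w = (u ⊗ₘ 𝟙 X) ≫ (v ⊗ₘ w) := by
  conv_lhs => rw [← Category.id_comp w]
  rw [← tensorHom_comp_tensorHom]

lemma tensor_split_right {A B C' X Y : M} (u : A ⟶ B) (v : B ⟶ C') (w : X ⟶ Y) :
    w ⊗ₘ (u ≫ v) = (𝟙 X ⊗ₘ u) ≫ (w ⊗ₘ v) := by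
  conv_lhs => rw [← Category.id_comp w]
  rw [← tensorHom_comp_tensorHom]

/-- `π_{n+1} : E ⟶ (E/D)^{⊗(n+1)}`, whose kernel is `D^{∧(n+1)}`. -/
noncomputable def pio (δ : D ⟶ E) (n : ℕ) : E.X ⟶ tpow (cokernel δ.hom) (n + 1) :=
  iterComul E n ≫ tpowHom (cokernel.π δ.hom) (n + 1)

lemma wedgePow_succ' (n : ℕ) : wedgePow δ (n + 1) = kernel (pio δ n) := rfl

lemma wedgePowι_succ' (n : ℕ) : wedgePowι δ (n + 1) = kernel.ι (pio δ n) := rfl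

lemma pio_one : pio δ 1 = (ComonObj.comul (X := E.X)) ≫ (cokernel.π δ.hom ⊗ₘ cokernel.π δ.hom) := by
  show ((ComonObj.comul (X := E.X)) ≫ (𝟙 E.X ⊗ₘ 𝟙 E.X)) ≫ (tpowHom (cokernel.π δ.hom) 1 ⊗ₘ cokernel.π δ.hom) = _
  rw [id_tensorHom_id, Category.comp_id]
  rfl

lemma pio_succ (n : ℕ) :
    pio δ (n + 1) = (ComonObj.comul (X := E.X)) ≫ (pio δ n ⊗ₘ cokernel.π δ.hom) := by
  show ((ComonObj.comul (X := E.X)) ≫ (iterComul E n ⊗ₘ 𝟙 E.X)) ≫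
      (tpowHom (cokernel.π δ.hom) (n + 1) ⊗ₘ cokernel.π δ.hom) = _
  rw [Category.assoc, tensorHom_comp_tensorHom, Category.id_comp]
  rfl

lemma pio_succ_succ (n : ℕ) :
    pio δ (n + 2) = (ComonObj.comul (X := E.X)) ≫ (pio δ n ⊗ₘ pio δ 1) ≫
      (α_ (tpow (cokernel δ.hom) (n + 1)) (cokernel δ.hom) (cokernel δ.hom)).inv := by
  rw [pio_succ, pio_succ, pio_one]
  show ComonObj.comul (X := E.X) ≫ ((ComonObj.comul (X := E.X) ≫
      (pio δ n ⊗ₘ cokernel.π δ.hom) : E.X ⟶ tpow (cokernel δ.hom) (n + 1) ⊗ cokernel δ.hom) ⊗ₘ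
      cokernel.π δ.hom) = ComonObj.comul (X := E.X) ≫ (pio δ n ⊗ₘ (ComonObj.comul (X := E.X) ≫
      (cokernel.π δ.hom ⊗ₘ cokernel.π δ.hom) : E.X ⟶ cokernel δ.hom ⊗ cokernel δ.hom)) ≫
      (α_ (tpow (cokernel δ.hom) (n + 1)) (cokernel δ.hom) (cokernel δ.hom)).inv
  rw [tensor_split_left, MonoidalCategory.tensorHom_id, ComonObj.comul_assoc_flip_assoc,
    ← MonoidalCategory.associator_inv_naturality, ← MonoidalCategory.id_tensorHom,
    ← Category.assoc (𝟙 E.X ⊗ₘ (ComonObj.comul (X := E.X))), tensorHom_comp_tensorHom, Category.id_comp]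

end Aux2
section Step

variable [∀ X : M, (tensorLeft X).Additive] [∀ X : M, (tensorRight X).Additive]
  [∀ X : M, PreservesFiniteLimits (tensorLeft X)]
  [∀ X : M, PreservesFiniteLimits (tensorRight X)]

lemma tensorHom_def₁ {A B X Y : M} (u : A ⟶ B) (v : X ⟶ Y) :
    u ⊗ₘ v = (u ⊗ₘ 𝟙 X) ≫ (B ◁ v) := by
  rw [← MonoidalCategory.id_tensorHom, tensorHom_comp_tensorHom,
    Category.comp_id, Category.id_comp]

lemma tensorHom_def₂ {A B X Y : M} (u : A ⟶ B) (v : X ⟶ Y) :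
    u ⊗ₘ v = (𝟙 A ⊗ₘ v) ≫ (u ▷ Y) := by
  rw [← MonoidalCategory.tensorHom_id, tensorHom_comp_tensorHom,
    Category.comp_id, Category.id_comp]

lemma tensor_split_right'' {A B C' X Y : M} (w : X ⟶ Y) (u : A ⟶ B) (v : B ⟶ C') :
    w ⊗ₘ (u ≫ v) = (w ⊗ₘ u) ≫ (𝟙 Y ⊗ₘ v) := by
  conv_lhs => rw [← Category.comp_id w]
  rw [← tensorHom_comp_tensorHom]

lemma hr_step {F : Comon M} (δ : D ⟶ E) [Mono δ.hom] (f : E ⟶ F)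
    (hf₂ : Mono (wedgePowι δ 2 ≫ f.hom)) (n : ℕ)
    (IH : Mono (wedgePowι δ (n + 2) ≫ f.hom)) :
    Mono (wedgePowι δ (n + 3) ≫ f.hom) := by
  have hf₂' : Mono (kernel.ι (pio δ 1) ≫ f.hom) := hf₂
  have IH' : Mono (kernel.ι (pio δ (n + 1)) ≫ f.hom) := IH
  set L : M := cokernel δ.hom with hL
  set Q : M := cokernel (δ.hom ≫ f.hom) with hQ
  set p : E.X ⟶ L := cokernel.π δ.hom with hp
  set c : F.X ⟶ Q := cokernel.π (δ.hom ≫ f.hom) with hc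
  rw [Preadditive.mono_iff_cancel_zero]
  intro T t₀ ht₀
  set x : T ⟶ E.X := t₀ ≫ wedgePowι δ (n + 3) with hxdef
  have hx1 : x ≫ f.hom = 0 := by rw [hxdef, Category.assoc]; exact ht₀
  have hx2 : x ≫ pio δ (n + 2) = 0 := by
    have hk : wedgePowι δ (n + 3) ≫ pio δ (n + 2) = 0 := kernel.condition _
    rw [hxdef, Category.assoc, hk, comp_zero]
  have b1 : x ≫ (ComonObj.comul (X := E.X)) ≫ (pio δ (n + 1) ⊗ₘ p) = 0 := by
    have h := hx2
    rw [pio_succ] at h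
    exact h
  have b2 : x ≫ (ComonObj.comul (X := E.X)) ≫ (pio δ n ⊗ₘ pio δ 1) = 0 := by
    have h := hx2
    rw [pio_succ_succ] at h
    exact (cancel_mono (α_ (tpow L (n + 1)) L L).inv).1 (by
      exact (Category.assoc _ _ _).trans ((congrArg
        (fun y : E.X ⟶ (tpow L (n + 1) ⊗ L) ⊗ L => x ≫ y) (Category.assoc _ _ _)).trans
        (h.trans zero_comp.symm)))
  -- Step A : `x ≫ Δ ≫ (𝟙 ⊗ₘ (f ≫ c)) = 0`
  have hDfc : δ.hom ≫ f.hom ≫ c = 0 := by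
    rw [← Category.assoc]; exact cokernel.condition _
  have hkerp : kernel.ι p ≫ f.hom ≫ c = 0 := by
    have hm := Abelian.monoLift_comp δ.hom (kernel.ι p) (kernel.condition _)
    rw [← hm, Category.assoc, hDfc, comp_zero]
  set g : T ⟶ E.X ⊗ Q := x ≫ (ComonObj.comul (X := E.X)) ≫ (𝟙 E.X ⊗ₘ (f.hom ≫ c)) with hgdef
  have hA1 : g ≫ (f.hom ▷ Q) = 0 := by
    have key : (ComonObj.comul (X := E.X)) ≫ ((𝟙 E.X ⊗ₘ (f.hom ≫ c)) ≫ (f.hom ▷ Q)) =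
        f.hom ≫ (ComonObj.comul (X := F.X)) ≫ (𝟙 F.X ⊗ₘ c) := by
      rw [← tensorHom_def₂, tensor_split_right'' f.hom f.hom c, ← IsComonHom.hom_comul_assoc]
    calc g ≫ (f.hom ▷ Q)
        = x ≫ (ComonObj.comul (X := E.X)) ≫ ((𝟙 E.X ⊗ₘ (f.hom ≫ c)) ≫ (f.hom ▷ Q)) := by
          rw [hgdef]; simp only [Category.assoc]
      _ = x ≫ f.hom ≫ (ComonObj.comul (X := F.X)) ≫ (𝟙 F.X ⊗ₘ c) := by rw [key]
      _ = 0 := by rw [← Category.assoc, hx1, zero_comp]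
  have h₁z : (x ≫ (ComonObj.comul (X := E.X)) ≫ (pio δ (n + 1) ⊗ₘ 𝟙 E.X)) ≫ (tpow L (n + 2) ◁ p) = 0 := by
    calc (x ≫ (ComonObj.comul (X := E.X)) ≫ (pio δ (n + 1) ⊗ₘ 𝟙 E.X)) ≫ (tpow L (n + 2) ◁ p)
        = x ≫ (ComonObj.comul (X := E.X)) ≫ ((pio δ (n + 1) ⊗ₘ 𝟙 E.X) ≫ (tpow L (n + 2) ◁ p)) := by
          simp only [Category.assoc]
      _ = x ≫ (ComonObj.comul (X := E.X)) ≫ (pio δ (n + 1) ⊗ₘ p) := by rw [← tensorHom_def₁]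
      _ = 0 := b1
  obtain ⟨u, hu⟩ := factorThruKernelLeft (tpow L (n + 2)) p (kernel.ι p)
    (kernel.condition p) (kernelIsKernel p) _ h₁z
  have hA2 : g ≫ (pio δ (n + 1) ▷ Q) = 0 := by
    calc g ≫ (pio δ (n + 1) ▷ Q)
        = x ≫ (ComonObj.comul (X := E.X)) ≫ ((𝟙 E.X ⊗ₘ (f.hom ≫ c)) ≫ (pio δ (n + 1) ▷ Q)) := by
          rw [hgdef]; simp only [Category.assoc]
      _ = x ≫ (ComonObj.comul (X := E.X)) ≫ (pio δ (n + 1) ⊗ₘ (f.hom ≫ c)) := by rw [← tensorHom_def₂]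
      _ = x ≫ (ComonObj.comul (X := E.X)) ≫ ((pio δ (n + 1) ⊗ₘ 𝟙 E.X) ≫ (tpow L (n + 2) ◁ (f.hom ≫ c))) := by
          rw [← tensorHom_def₁]
      _ = (x ≫ (ComonObj.comul (X := E.X)) ≫ (pio δ (n + 1) ⊗ₘ 𝟙 E.X)) ≫ (tpow L (n + 2) ◁ (f.hom ≫ c)) := by
          simp only [Category.assoc]
      _ = (u ≫ (tpow L (n + 2) ◁ kernel.ι p)) ≫ (tpow L (n + 2) ◁ (f.hom ≫ c)) := by
          rw [hu]
      _ = u ≫ (tpow L (n + 2) ◁ (kernel.ι p ≫ f.hom ≫ c)) := by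
          simp only [MonoidalCategory.whiskerLeft_comp, Category.assoc]
      _ = 0 := by rw [hkerp, whiskerLeft_zero', comp_zero]
  have hg : g = 0 := by
    obtain ⟨u₁, hu₁⟩ := factorThruKernelRight Q f.hom (kernel.ι f.hom)
      (kernel.condition _) (kernelIsKernel _) g hA1
    obtain ⟨u₂, hu₂⟩ := factorThruKernelRight Q (pio δ (n + 1)) (kernel.ι _)
      (kernel.condition _) (kernelIsKernel _) g hA2
    have hpb2 : (pullback.snd (kernel.ι f.hom) (kernel.ι (pio δ (n + 1)))) = 0 := by
      have hz : pullback.snd (kernel.ι f.hom) (kernel.ι (pio δ (n + 1))) ≫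
          (kernel.ι (pio δ (n + 1)) ≫ f.hom) = 0 := by
        rw [← Category.assoc, ← pullback.condition, Category.assoc, kernel.condition, comp_zero]
      exact zero_of_comp_mono _ hz
    have hpb1 : (pullback.fst (kernel.ι f.hom) (kernel.ι (pio δ (n + 1)))) = 0 := by
      have hz : pullback.fst (kernel.ι f.hom) (kernel.ι (pio δ (n + 1))) ≫ kernel.ι f.hom = 0 := by
        rw [pullback.condition, hpb2, zero_comp]
      exact zero_of_comp_mono _ hz
    have hcomm : u₁ ≫ (tensorRight Q).map (kernel.ι f.hom) =
        u₂ ≫ (tensorRight Q).map (kernel.ι (pio δ (n + 1))) := by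
      simp only [tensorRight_map]
      rw [hu₁, hu₂]
    have hgeq : g = pullback.lift u₁ u₂ hcomm ≫
        pullback.fst ((tensorRight Q).map (kernel.ι f.hom))
          ((tensorRight Q).map (kernel.ι (pio δ (n + 1)))) ≫
        (tensorRight Q).map (kernel.ι f.hom) := by
      rw [← Category.assoc, pullback.lift_fst]
      simp only [tensorRight_map]
      rw [hu₁]
    have hfst : pullback.fst ((tensorRight Q).map (kernel.ι f.hom))
          ((tensorRight Q).map (kernel.ι (pio δ (n + 1)))) =
        inv (pullbackComparison (tensorRight Q) (kernel.ι f.hom) (kernel.ι (pio δ (n + 1)))) ≫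
          (tensorRight Q).map (pullback.fst (kernel.ι f.hom) (kernel.ι (pio δ (n + 1)))) := by
      rw [IsIso.eq_inv_comp, pullbackComparison_comp_fst]
    rw [hgeq, hfst, hpb1, Functor.map_zero, comp_zero, zero_comp, comp_zero]
  -- Steps B, C, D
  set W : M := tpow L (n + 1) with hW
  set y : T ⟶ W ⊗ E.X := x ≫ (ComonObj.comul (X := E.X)) ≫ (pio δ n ⊗ₘ 𝟙 E.X) with hydef
  have hyb : y ≫ (W ◁ pio δ 1) = 0 := by
    calc y ≫ (W ◁ pio δ 1)
        = x ≫ (ComonObj.comul (X := E.X)) ≫ ((pio δ n ⊗ₘ 𝟙 E.X) ≫ (W ◁ pio δ 1)) := by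
          rw [hydef]; simp only [Category.assoc]
      _ = x ≫ (ComonObj.comul (X := E.X)) ≫ (pio δ n ⊗ₘ pio δ 1) := by rw [← tensorHom_def₁]
      _ = 0 := b2
  obtain ⟨y', hy'⟩ := factorThruKernelLeft W (pio δ 1) (kernel.ι (pio δ 1))
    (kernel.condition _) (kernelIsKernel _) y hyb
  -- the canonical morphism `j : D ⟶ D ∧ D` is the kernel of `δ₂ ≫ f ≫ c`
  have hδpio1 : δ.hom ≫ pio δ 1 = 0 := by
    have hpo : δ.hom ≫ pio δ 1 = ((δ.hom ≫ ComonObj.comul (X := E.X)) ≫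
        (cokernel.π δ.hom ⊗ₘ cokernel.π δ.hom) : D.X ⟶ L ⊗ L) := by
      rw [pio_one]; exact (Category.assoc _ _ _).symm
    rw [hpo, IsComonHom.hom_comul, Category.assoc,
      tensorHom_comp_tensorHom, cokernel.condition]
    rw [tensorHom_def₂, whiskerRight_zero', comp_zero, comp_zero]
    rfl
  set j : D.X ⟶ kernel (pio δ 1) := kernel.lift (pio δ 1) δ.hom hδpio1 with hjdef
  have hj : j ≫ kernel.ι (pio δ 1) = δ.hom := kernel.lift_ι _ _ _
  have hmonoj : Mono j := by
    have : Mono (j ≫ kernel.ι (pio δ 1)) := by rw [hj]; infer_instance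
    exact mono_of_mono j (kernel.ι (pio δ 1))
  have hmonoδf : Mono (δ.hom ≫ f.hom) := by
    have h2 : Mono (j ≫ (kernel.ι (pio δ 1) ≫ f.hom)) := mono_comp _ _
    rw [← Category.assoc, hj] at h2
    exact h2
  have hjφ : j ≫ (kernel.ι (pio δ 1) ≫ f.hom ≫ c) = 0 := by
    rw [← Category.assoc, hj, hDfc]
  have hlim : IsLimit (KernelFork.ofι j hjφ) := by
    refine KernelFork.IsLimit.ofι j hjφ
      (fun {S} v hv => Abelian.monoLift (δ.hom ≫ f.hom) (v ≫ kernel.ι (pio δ 1) ≫ f.hom) ?_)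
      (fun {S} v hv => ?_) (fun {S} v hv w hw => ?_)
    · rw [Category.assoc, Category.assoc]
      simpa [Category.assoc] using hv
    · rw [← cancel_mono (kernel.ι (pio δ 1) ≫ f.hom), Category.assoc, ← Category.assoc j, hj]
      exact Abelian.monoLift_comp _ _ _
    · rw [← cancel_mono (δ.hom ≫ f.hom), Abelian.monoLift_comp]
      conv_lhs => rw [← hj]
      simp only [← Category.assoc]
      rw [hw]
  -- Step C
  have hC : y' ≫ (W ◁ (kernel.ι (pio δ 1) ≫ f.hom ≫ c)) = 0 := by
    calc y' ≫ (W ◁ (kernel.ι (pio δ 1) ≫ f.hom ≫ c))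
        = (y' ≫ (W ◁ kernel.ι (pio δ 1))) ≫ (W ◁ (f.hom ≫ c)) := by
          rw [MonoidalCategory.whiskerLeft_comp]; simp only [Category.assoc]
      _ = y ≫ (W ◁ (f.hom ≫ c)) := by rw [hy']
      _ = x ≫ (ComonObj.comul (X := E.X)) ≫ ((pio δ n ⊗ₘ 𝟙 E.X) ≫ (W ◁ (f.hom ≫ c))) := by
          rw [hydef]; simp only [Category.assoc]
      _ = x ≫ (ComonObj.comul (X := E.X)) ≫ (pio δ n ⊗ₘ (f.hom ≫ c)) := by rw [← tensorHom_def₁]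
      _ = x ≫ (ComonObj.comul (X := E.X)) ≫ ((𝟙 E.X ⊗ₘ (f.hom ≫ c)) ≫ (pio δ n ▷ Q)) := by rw [← tensorHom_def₂]
      _ = g ≫ (pio δ n ▷ Q) := by rw [hgdef]; simp only [Category.assoc]
      _ = 0 := by rw [hg, zero_comp]
  obtain ⟨y'', hy''⟩ := factorThruKernelLeft W _ j hjφ hlim y' hC
  -- Step E : `x` factors through `D^{∧(n+2)}`
  have hδp : δ.hom ≫ p = 0 := cokernel.condition δ.hom
  have hxpio : x ≫ pio δ (n + 1) = 0 := by
    calc (x ≫ pio δ (n + 1) : T ⟶ W ⊗ L)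
        = x ≫ (ComonObj.comul (X := E.X)) ≫ ((pio δ n ⊗ₘ 𝟙 E.X) ≫ (W ◁ p)) := by
          rw [pio_succ, tensorHom_def₁ (pio δ n) p]
      _ = y ≫ (W ◁ p) := by rw [hydef]; simp only [Category.assoc]
      _ = (y' ≫ (W ◁ kernel.ι (pio δ 1))) ≫ (W ◁ p) := by rw [hy']
      _ = (y'' ≫ (W ◁ j)) ≫ (W ◁ kernel.ι (pio δ 1)) ≫ (W ◁ p) := by
          rw [hy'']; simp only [Category.assoc]
      _ = y'' ≫ (W ◁ (j ≫ kernel.ι (pio δ 1) ≫ p)) := by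
          simp only [MonoidalCategory.whiskerLeft_comp, Category.assoc]
      _ = 0 := by rw [← Category.assoc j, hj, hδp, whiskerLeft_zero', comp_zero]
  have hlift : kernel.lift (pio δ (n + 1)) x hxpio ≫ kernel.ι (pio δ (n + 1)) = x :=
    kernel.lift_ι _ _ _
  have h0 : kernel.lift (pio δ (n + 1)) x hxpio = 0 := by
    apply zero_of_comp_mono (kernel.ι (pio δ (n + 1)) ≫ f.hom)
    rw [← Category.assoc, hlift, hx1]
  have hx0 : x = 0 := by rw [← hlift, h0, zero_comp]
  have ht : t₀ ≫ wedgePowι δ (n + 3) = 0 := by rw [← hxdef]; exact hx0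
  haveI := wedgePowι_mono δ (n + 2)
  exact zero_of_comp_mono (wedgePowι δ (n + 3)) ht

end Step
section All

variable [∀ X : M, (tensorLeft X).Additive] [∀ X : M, (tensorRight X).Additive]
  [∀ X : M, PreservesFiniteLimits (tensorLeft X)]
  [∀ X : M, PreservesFiniteLimits (tensorRight X)]

lemma hr_mono_all {F : Comon M} (δ : D ⟶ E) [Mono δ.hom]
    (ξ : ∀ i : ℕ, wedgePow δ i ⟶ wedgePow δ (i + 1))
    (hξ : ∀ i : ℕ, ξ i ≫ wedgePowι δ (i + 1) = wedgePowι δ i)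
    (f : E ⟶ F) (hf₂ : Mono (wedgePowι δ 2 ≫ f.hom)) :
    ∀ n : ℕ, Mono (wedgePowι δ n ≫ f.hom)
  | 0 => by
      constructor
      intro Z a b _
      exact (isZero_zero M).eq_of_tgt a b
  | 1 => by
      have h1 := hξ 1
      have hm : Mono (ξ 1) := by
        have : Mono (ξ 1 ≫ wedgePowι δ 2) := by rw [h1]; infer_instance
        exact mono_of_mono (ξ 1) (wedgePowι δ 2)
      have he : wedgePowι δ 1 ≫ f.hom = ξ 1 ≫ (wedgePowι δ 2 ≫ f.hom) := by
        rw [← Category.assoc, h1]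
      rw [he]
      exact mono_comp _ _
  | 2 => hf₂
  | (n + 3) => hr_step δ f hf₂ n (hr_mono_all δ ξ hξ f hf₂ (n + 2))

end All

/-- Heyneman–Radford for monoidal categories.  Let `δ : D ⟶ E` be a
monomorphism of coalgebras in a cocomplete coabelian monoidal category `M` satisfying AB5,
let `D̃_E := colim_{i ∈ ℕ} D^{∧_E^i}` (the colimit of the direct system given by the canonical
morphisms `ξ_i : D^{∧_E^i} ⟶ D^{∧_E^{i+1}}`, characterised by `δ_{i+1} ∘ ξ_i = δ_i`), and let
`δ̃ : D̃_E ⟶ E` be the unique morphism with `δ̃ ∘ (colimit.ι i) = δ_i` for all `i`.  If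
`f : E ⟶ C` is a coalgebra homomorphism such that `f ∘ δ₂ : D ∧_E D ⟶ C` is a monomorphism,
then `f ∘ δ̃ : D̃_E ⟶ C` is a monomorphism. -/
theorem heyneman_radford_monoidal
    {M : Type u} [Category.{v} M] [MonoidalCategory M] [Abelian M]
    [∀ X : M, (tensorLeft X).Additive] [∀ X : M, (tensorRight X).Additive]
    [∀ X : M, PreservesFiniteLimits (tensorLeft X)]
    [∀ X : M, PreservesFiniteLimits (tensorRight X)]
    [HasColimits M] [HasColimitsOfShape ℕ M] [HasFilteredColimits M] [AB5 M]
    {D E C : Comon M} (δ : D ⟶ E) [Mono δ.hom]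
    -- the canonical morphisms `ξ_i^{i+1}` of the direct system of wedge powers
    (ξ : ∀ i : ℕ, wedgePow δ i ⟶ wedgePow δ (i + 1))
    (hξ : ∀ i : ℕ, ξ i ≫ wedgePowι δ (i + 1) = wedgePowι δ i)
    -- `δ̃ : D̃_E ⟶ E`, where `D̃_E` is the colimit of the direct system
    (δtilde : colimit (Functor.ofSequence ξ) ⟶ E.X)
    (hδtilde : ∀ i : ℕ, colimit.ι (Functor.ofSequence ξ) i ≫ δtilde = wedgePowι δ i)
    (f : E ⟶ C) (hf₂ : Mono (wedgePowι δ 2 ≫ f.hom)) :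
    Mono (δtilde ≫ f.hom) := by

  -- all the `δ_n ≫ f` are monomorphisms
  have hmono : ∀ n : ℕ, Mono (wedgePowι δ n ≫ f.hom) := hr_mono_all δ ξ hξ f hf₂
  -- the natural transformation with components `δ_n ≫ f`
  have hnat : ∀ n : ℕ, (Functor.ofSequence ξ).map (homOfLE (n.le_add_right 1)) ≫
      (wedgePowι δ (n + 1) ≫ f.hom) =
      (wedgePowι δ n ≫ f.hom) ≫ ((Functor.const ℕ).obj C.X).map (homOfLE (n.le_add_right 1)) := by
    intro n
    rw [Functor.ofSequence_map_homOfLE_succ, Functor.const_obj_map, Category.comp_id]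
    exact (Category.assoc _ _ _).symm.trans (congrArg (· ≫ f.hom) (hξ n))
  set η : Functor.ofSequence ξ ⟶ (Functor.const ℕ).obj C.X :=
    NatTrans.ofSequence (fun n => wedgePowι δ n ≫ f.hom) hnat with hη
  have hηapp : ∀ n : ℕ, η.app n = wedgePowι δ n ≫ f.hom := by
    intro n; rw [hη]; rfl
  -- transfer along the equivalence with a `Type v`-small filtered category
  let e : ℕ ≌ ULiftHom.{v} (ULift.{v} ℕ) := ULiftHomULiftCategory.equiv.{v, v} ℕ
  haveI hfinal : (e.inverse).Final := Functor.final_of_adjunction e.toAdjunction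
  let η' := Functor.whiskerLeft e.inverse η
  haveI : ∀ j, Mono (η'.app j) := by
    intro j
    show Mono (η.app (e.inverse.obj j))
    rw [hηapp]; exact hmono _
  haveI : Mono η' := NatTrans.mono_of_mono_app η'
  haveI : PreservesFiniteLimits
      (colim (J := ULiftHom.{v} (ULift.{v} ℕ)) (C := M)) :=
    (AB5OfSize.ofShape _).preservesFiniteLimits
  haveI hmono' : Mono (colim.map η') := (colim).map_mono η'
  -- the comparison square
  have hsq : colimit.pre (Functor.ofSequence ξ) e.inverse ≫ colim.map η =
      colim.map η' ≫ colimit.pre ((Functor.const ℕ).obj C.X) e.inverse := by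
    apply colimit.hom_ext
    intro j
    rw [colimit.ι_pre_assoc, colimit.ι_map, colimit.ι_map_assoc, colimit.ι_pre]
    rfl
  haveI : IsIso (colimit.pre (Functor.ofSequence ξ) e.inverse) := inferInstance
  haveI : IsIso (colimit.pre ((Functor.const ℕ).obj C.X) e.inverse) := inferInstance
  have hmη : Mono (colim.map η) := by
    have heq : colim.map η = inv (colimit.pre (Functor.ofSequence ξ) e.inverse) ≫
        colim.map η' ≫ colimit.pre ((Functor.const ℕ).obj C.X) e.inverse := by
      rw [IsIso.eq_inv_comp]; exact hsq
    rw [heq]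
    exact mono_comp _ _
  -- the colimit of the constant functor is `C.X`
  let tcone : Cocone ((Functor.const ℕ).obj C.X) :=
    { pt := C.X
      ι := { app := fun _ => 𝟙 C.X, naturality := by intros; simp } }
  let t : colimit ((Functor.const ℕ).obj C.X) ⟶ C.X := colimit.desc _ tcone
  have hti : ∀ i : ℕ, colimit.ι ((Functor.const ℕ).obj C.X) i ≫ t = 𝟙 C.X := fun i =>
    colimit.ι_desc _ _
  have hιeq : ∀ i : ℕ, colimit.ι ((Functor.const ℕ).obj C.X) i =
      colimit.ι ((Functor.const ℕ).obj C.X) 0 := by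
    intro i
    have hw := colimit.w ((Functor.const ℕ).obj C.X) (homOfLE (Nat.zero_le i))
    simpa using hw
  haveI : IsIso t := by
    refine ⟨colimit.ι ((Functor.const ℕ).obj C.X) 0, ?_, hti 0⟩
    apply colimit.hom_ext
    intro i
    rw [← Category.assoc, hti i]
    simp only [Category.comp_id]
    rw [hιeq i]
    exact Category.id_comp _
  -- conclude
  have hfinaleq : δtilde ≫ f.hom = colim.map η ≫ t := by
    apply colimit.hom_ext
    intro i
    rw [← Category.assoc, hδtilde i, colimit.ι_map_assoc, hti i]
    exact ((Category.comp_id (η.app i)).trans (hηapp i)).symm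
  rw [hfinaleq]
  exact mono_comp _ _
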